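/- Let σ, τ : [m] → [m] be two permutations (rankings of m items). Then Σ_{i=1}^m |σ(i) − τ(i)| ≤ 2·|{ (i,j) : 1 ≤ i < j ≤ m, (σ(i) − σ(j))·(τ(i) − τ(j)) < 0 }|; that is, Spearman's footrule is at most twice Kendall's tau distance. -/

import Mathlib

/-! If `σ i > τ i`, then among the `σ i` items ranked below `i` by `σ`, at most `τ i` are ranked
below `i` by `τ`, so at least `σ i - τ i` items `j` are ordered differently relative to `i` by `σ`
and `τ`. Hence `|σ i - τ i|` is at most the number of items discordant with `i`; summing over `i`
counts every discordant pair twice. -/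

open Finset

lemma card_filter_apply_lt {α : Type*} [Fintype α] {m : ℕ} (e : α ≃ Fin m) (i : α) :
    #{j | e j < e i} = e i := by
  have h : ({j | e j < e i} : Finset α) = (Iio (e i)).map e.symm.toEmbedding := by
    ext j
    simp
  rw [h, card_map, Fin.card_Iio]

lemma card_filter_eq_two_mul_card_filter_lt {α : Type*} [Fintype α] [LinearOrder α]
    (r : α → α → Prop) [DecidableRel r] (hsymm : ∀ a b, r a b → r b a) (hirrefl : ∀ a, ¬ r a a) :
    #{p : α × α | r p.1 p.2} = 2 * #{p : α × α | p.1 < p.2 ∧ r p.1 p.2} := by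
  set P : Finset (α × α) := {p | r p.1 p.2}
  have hlt : #(P.filter fun p => p.1 < p.2) = #{p : α × α | p.1 < p.2 ∧ r p.1 p.2} := by
    rw [filter_filter]
    simp only [and_comm]
  have hnlt : #(P.filter fun p => ¬ p.1 < p.2) = #{p : α × α | p.1 < p.2 ∧ r p.1 p.2} := by
    refine card_bij (fun p _ => p.swap) ?_ (fun _ _ _ _ h => Prod.swap_injective h) ?_
    · rintro ⟨a, b⟩ hp
      simp only [P, mem_filter, mem_univ, true_and, not_lt] at hp ⊢
      refine ⟨lt_of_le_of_ne hp.2 fun h => hirrefl a ?_, hsymm _ _ hp.1⟩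
      simp only [Prod.swap_prod_mk] at h
      subst h
      exact hp.1
    · rintro ⟨a, b⟩ hp
      simp only [mem_filter, mem_univ, true_and] at hp
      exact ⟨(b, a), by simp [P, hsymm _ _ hp.2, hp.1.le], rfl⟩
  rw [← card_filter_add_card_filter_not (s := P) (fun p => p.1 < p.2), hlt, hnlt, two_mul]

section Permutations

variable {m : ℕ}

def Discordant (σ τ : Equiv.Perm (Fin m)) (i j : Fin m) : Prop :=
  ((σ i : ℤ) - σ j) * ((τ i : ℤ) - τ j) < 0

instance (σ τ : Equiv.Perm (Fin m)) : DecidableRel (Discordant σ τ) :=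
  fun _ _ => inferInstanceAs (Decidable (_ < _))

lemma discordant_comm (σ τ : Equiv.Perm (Fin m)) (i j : Fin m) :
    Discordant σ τ i j ↔ Discordant τ σ i j := by
  simp only [Discordant, mul_comm]

lemma Discordant.symm {σ τ : Equiv.Perm (Fin m)} {i j : Fin m} (h : Discordant σ τ i j) :
    Discordant σ τ j i := by
  unfold Discordant at h ⊢
  linarith

lemma not_discordant_self (σ τ : Equiv.Perm (Fin m)) (i : Fin m) : ¬ Discordant σ τ i i := by
  simp [Discordant]

lemma sub_le_card_discordant (σ τ : Equiv.Perm (Fin m)) (i : Fin m) :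
    (σ i : ℤ) - τ i ≤ #{j | Discordant σ τ i j} := by
  set S : Finset (Fin m) := {j | σ j < σ i}
  set T : Finset (Fin m) := {j | τ j < τ i}
  have hsub : S \ T ⊆ univ.filter fun j => Discordant σ τ i j := by
    intro j hj
    simp only [S, T, mem_sdiff, mem_filter, mem_univ, true_and, not_lt] at hj
    obtain ⟨hσ, hτ⟩ := hj
    have hji : j ≠ i := by rintro rfl; exact lt_irrefl _ hσ
    have hτ' : τ i < τ j := lt_of_le_of_ne hτ fun h => hji (τ.injective h.symm)
    rw [mem_filter]
    refine ⟨mem_univ j, ?_⟩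
    unfold Discordant
    apply mul_neg_of_pos_of_neg <;> simp only [Fin.lt_def] at hσ hτ' <;> omega
  have hcard : (σ i : ℕ) - τ i ≤ #(S \ T) := by
    rw [← card_filter_apply_lt σ i, ← card_filter_apply_lt τ i]
    exact le_card_sdiff T S
  have := card_le_card hsub
  omega

lemma abs_sub_le_card_discordant (σ τ : Equiv.Perm (Fin m)) (i : Fin m) :
    |(σ i : ℤ) - τ i| ≤ #{j | Discordant σ τ i j} := by
  rw [abs_le]
  constructor
  · have := sub_le_card_discordant τ σ i
    simp only [← discordant_comm] at this
    linarith
  · exact sub_le_card_discordant σ τ i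

end Permutations

/-- Diaconis–Graham: Spearman's footrule is at most twice Kendall's tau distance. -/
theorem stmt13 (m : ℕ) (σ τ : Equiv.Perm (Fin m)) :
    ∑ i, |((σ i : ℤ) - (τ i : ℤ))|
      ≤ 2 * ((Finset.univ.filter
          (fun p : Fin m × Fin m => p.1 < p.2 ∧
            ((σ p.1 : ℤ) - (σ p.2 : ℤ)) * ((τ p.1 : ℤ) - (τ p.2 : ℤ)) < 0)).card : ℤ) := by
  have hpairs :
      ∑ i, #{j | Discordant σ τ i j} = #{p : Fin m × Fin m | Discordant σ τ p.1 p.2} := by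
    simp only [card_filter, ← univ_product_univ, sum_product]
  calc ∑ i, |(σ i : ℤ) - τ i|
      ≤ ∑ i, (#{j | Discordant σ τ i j} : ℤ) :=
        sum_le_sum fun i _ => abs_sub_le_card_discordant σ τ i
    _ = 2 * #{p : Fin m × Fin m | p.1 < p.2 ∧ Discordant σ τ p.1 p.2} := by
        rw [← Nat.cast_sum, hpairs, card_filter_eq_two_mul_card_filter_lt (Discordant σ τ)
          (fun _ _ => Discordant.symm) (not_discordant_self σ τ)]
        push_cast
        rfl
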